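/- Let n ≥ 2, and let B = {z ∈ ℂ : there exists a ∈ (0, 1] with z = a + 2i·a·√(1 − a²) or z = a − 2i·a·√(1 − a²)} (the boundary arcs of the teardrop domain with the corner 0 removed). Then the map Φ : {p ∈ ℝ^n : ‖p‖ = 1} × B → ℂ^n, Φ(p, z) = z·p, is injective, its range is exactly W(S^n_1) ∖ {0}, and Φ is a homeomorphism onto its range (for the subspace topologies). (The boundary evaluation of the family of holomorphic teardrops is a homeomorphism onto the Whitney sphere with its double point removed.) -/

import Mathlib

/-!
For a real unit vector `p` and `re z > 0`, the vector `v = z • p` determines `(p, z)`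
continuously: `re v = (re z) • p` has norm `re z` and direction `p`, and `im z = ⟪p, im v⟫`.
This is a continuous left inverse on the open set where `re v ≠ 0`, so `(p, z) ↦ z • p` is an
embedding.

For the range, `W(x) = (1 + 2i x₀) • y` with `y = (x₁, …, xₙ)`, while the arc points are exactly
`a (1 + 2i t)` with `a > 0` and `t² + a² = 1`. Writing `y = a • p` with `a = ‖y‖` matches the
two sides, and `W(x) = 0` exactly when `y = 0`.
-/

open scoped BigOperators

/-- The Whitney sphere parameterization `W : ℝ^{n+1} → ℂ^n`,
`W(x)_j = x_j + 2i·x_0·x_j` for `1 ≤ j ≤ n`. -/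
noncomputable def whitney (n : ℕ) (x : EuclideanSpace ℝ (Fin (n + 1))) : Fin n → ℂ :=
  fun j => (x j.succ : ℂ) + 2 * Complex.I * (x 0 : ℂ) * (x j.succ : ℂ)

open Complex Metric Set Topology

lemma Topology.IsEmbedding.of_comp_of_continuousOn {X Y Z : Type*} [TopologicalSpace X]
    [TopologicalSpace Y] [TopologicalSpace Z] {f : X → Y} {g : Y → Z} {s : Set Y}
    (hf : Continuous f) (hfs : ∀ x, f x ∈ s) (hg : ContinuousOn g s)
    (hgf : IsEmbedding (g ∘ f)) : IsEmbedding f :=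
  IsEmbedding.subtypeVal.comp <| .of_comp (hf.codRestrict hfs) hg.domRestrict hgf

def teardropBoundary : Set ℂ := {z | ∃ a : ℝ, 0 < a ∧ a ≤ 1 ∧
  (z = (a : ℂ) + 2 * Complex.I * (a : ℂ) * (Real.sqrt (1 - a ^ 2) : ℂ) ∨
    z = (a : ℂ) - 2 * Complex.I * (a : ℂ) * (Real.sqrt (1 - a ^ 2) : ℂ))}

lemma mem_teardropBoundary_iff {z : ℂ} :
    z ∈ teardropBoundary ↔ ∃ a t : ℝ, 0 < a ∧ t ^ 2 + a ^ 2 = 1 ∧ z = a * (1 + 2 * I * t) := by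
  constructor
  · rintro ⟨a, ha0, ha1, hz | hz⟩
    · refine ⟨a, √(1 - a ^ 2), ha0, ?_, by rw [hz]; ring⟩
      rw [Real.sq_sqrt (by nlinarith)]; ring
    · refine ⟨a, -√(1 - a ^ 2), ha0, ?_, by rw [hz]; push_cast; ring⟩
      rw [neg_sq, Real.sq_sqrt (by nlinarith)]; ring
  · rintro ⟨a, t, ha0, hta, rfl⟩
    have hs : √(1 - a ^ 2) = |t| := by rw [← Real.sqrt_sq_eq_abs]; congr 1; linarith
    refine ⟨a, ha0, by nlinarith, ?_⟩
    rcases abs_choice t with h | h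
    · left; rw [hs, h]; ring
    · right; rw [hs, h]; push_cast; ring

lemma re_pos_of_mem_teardropBoundary {z : ℂ} (hz : z ∈ teardropBoundary) : 0 < z.re := by
  obtain ⟨a, t, ha, -, rfl⟩ := mem_teardropBoundary_iff.1 hz
  simpa using ha

section

variable {ι : Type*}

def rePart (v : ι → ℂ) : EuclideanSpace ℝ ι := WithLp.toLp 2 fun j => (v j).re

def imPart (v : ι → ℂ) : EuclideanSpace ℝ ι := WithLp.toLp 2 fun j => (v j).im

lemma continuous_rePart : Continuous (rePart (ι := ι)) := by
  unfold rePart; fun_prop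

lemma continuous_imPart : Continuous (imPart (ι := ι)) := by
  unfold imPart; fun_prop

lemma rePart_smul_ofReal (z : ℂ) (p : EuclideanSpace ℝ ι) :
    rePart (fun j => z * (p j : ℂ)) = z.re • p := by
  ext j; simp [rePart]

lemma imPart_smul_ofReal (z : ℂ) (p : EuclideanSpace ℝ ι) :
    imPart (fun j => z * (p j : ℂ)) = z.im • p := by
  ext j; simp [imPart]

variable [Fintype ι]

def sphereSMul (B : Set ℂ) : sphere (0 : EuclideanSpace ℝ ι) 1 × B → ι → ℂ :=
  fun pz j => (pz.2 : ℂ) * ((pz.1 : EuclideanSpace ℝ ι) j : ℂ)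

noncomputable def sphereSMulInv (v : ι → ℂ) : EuclideanSpace ℝ ι × ℂ :=
  (‖rePart v‖⁻¹ • rePart v, ‖rePart v‖ + inner ℝ (‖rePart v‖⁻¹ • rePart v) (imPart v) * I)

lemma continuousOn_sphereSMulInv :
    ContinuousOn (sphereSMulInv (ι := ι)) {v | rePart v ≠ 0} := by
  have := continuous_rePart (ι := ι)
  have := continuous_imPart (ι := ι)
  unfold sphereSMulInv
  fun_prop (disch := simp_all)

lemma sphereSMulInv_smul_ofReal {z : ℂ} (hz : 0 < z.re) {p : EuclideanSpace ℝ ι} (hp : ‖p‖ = 1) :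
    sphereSMulInv (fun j => z * (p j : ℂ)) = (p, z) := by
  have hre : ‖z.re • p‖ = z.re := by rw [norm_smul, hp, mul_one, Real.norm_of_nonneg hz.le]
  simp only [sphereSMulInv, rePart_smul_ofReal, imPart_smul_ofReal, hre, smul_smul,
    inv_mul_cancel₀ hz.ne', one_smul, inner_smul_right, real_inner_self_eq_norm_sq, hp]
  simp

lemma rePart_sphereSMul_ne_zero {B : Set ℂ} (hB : ∀ z ∈ B, 0 < z.re)
    (pz : sphere (0 : EuclideanSpace ℝ ι) 1 × B) : rePart (sphereSMul B pz) ≠ 0 := by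
  obtain ⟨p, z⟩ := pz
  show rePart (fun j => (z : ℂ) * ((p : EuclideanSpace ℝ ι) j : ℂ)) ≠ 0
  rw [rePart_smul_ofReal]
  exact smul_ne_zero (hB z z.2).ne' (ne_zero_of_mem_unit_sphere p)

lemma sphereSMul_ne_zero {B : Set ℂ} (hB : ∀ z ∈ B, 0 < z.re)
    (pz : sphere (0 : EuclideanSpace ℝ ι) 1 × B) : sphereSMul B pz ≠ 0 := fun h =>
  rePart_sphereSMul_ne_zero hB pz (by rw [h]; ext; simp [rePart])

theorem isEmbedding_sphereSMul {B : Set ℂ} (hB : ∀ z ∈ B, 0 < z.re) :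
    IsEmbedding (sphereSMul (ι := ι) B) := by
  refine .of_comp_of_continuousOn (by unfold sphereSMul; fun_prop) (s := {v | rePart v ≠ 0})
    (rePart_sphereSMul_ne_zero hB) continuousOn_sphereSMulInv ?_
  have : sphereSMulInv ∘ sphereSMul B =
      Prod.map ((↑) : sphere (0 : EuclideanSpace ℝ ι) 1 → _) ((↑) : B → ℂ) := by
    funext ⟨p, z⟩
    exact sphereSMulInv_smul_ofReal (hB z z.2) (mem_sphere_zero_iff_norm.1 p.2)
  rw [this]
  exact IsEmbedding.subtypeVal.prodMap IsEmbedding.subtypeVal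

end

lemma whitney_apply {n : ℕ} (x : EuclideanSpace ℝ (Fin (n + 1))) (j : Fin n) :
    whitney n x j = (1 + 2 * I * x 0) * x j.succ := by
  simp only [whitney]; ring

lemma EuclideanSpace.norm_sq_eq_sq_add_norm_sq_tail {n : ℕ} (x : EuclideanSpace ℝ (Fin (n + 1))) :
    ‖x‖ ^ 2 = x 0 ^ 2 + ‖(WithLp.toLp 2 (Fin.tail x.ofLp) : EuclideanSpace ℝ (Fin n))‖ ^ 2 := by
  simp [EuclideanSpace.real_norm_sq_eq, Fin.sum_univ_succ, Fin.tail]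

lemma range_sphereSMul_teardropBoundary_subset (n : ℕ) :
    range (sphereSMul (ι := Fin n) teardropBoundary) ⊆
      whitney n '' sphere (0 : EuclideanSpace ℝ (Fin (n + 1))) 1 \ {0} := by
  rintro _ ⟨⟨⟨p, hp⟩, ⟨z, hz⟩⟩, rfl⟩
  rw [mem_sphere_zero_iff_norm] at hp
  obtain ⟨a, t, ha, hta, rfl⟩ := mem_teardropBoundary_iff.1 hz
  let x : EuclideanSpace ℝ (Fin (n + 1)) := WithLp.toLp 2 (Fin.cons t (a • p).ofLp)
  have hx : ‖x‖ ^ 2 = 1 := by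
    rw [EuclideanSpace.norm_sq_eq_sq_add_norm_sq_tail]
    simp only [x, Fin.tail_cons, Fin.cons_zero, WithLp.toLp_ofLp, norm_smul, hp,
      Real.norm_of_nonneg ha.le]
    linarith
  refine ⟨⟨x, mem_sphere_zero_iff_norm.2 ((pow_eq_one_iff_of_nonneg (norm_nonneg x)
    two_ne_zero).1 hx), ?_⟩, sphereSMul_ne_zero (fun _ => re_pos_of_mem_teardropBoundary) _⟩
  funext j
  simp [x, whitney_apply, sphereSMul]
  ring

lemma whitney_sphere_diff_zero_subset_range (n : ℕ) :
    whitney n '' sphere (0 : EuclideanSpace ℝ (Fin (n + 1))) 1 \ {0} ⊆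
      range (sphereSMul (ι := Fin n) teardropBoundary) := by
  rintro _ ⟨⟨x, hx, rfl⟩, hne⟩
  set y : EuclideanSpace ℝ (Fin n) := WithLp.toLp 2 (Fin.tail x.ofLp)
  have hy : y ≠ 0 := by
    rintro hy
    apply hne
    funext j
    rw [whitney_apply, show x j.succ = 0 from congrArg (· j) hy]
    simp
  have hxy := EuclideanSpace.norm_sq_eq_sq_add_norm_sq_tail x
  rw [mem_sphere_zero_iff_norm.1 hx] at hxy
  refine ⟨⟨⟨‖y‖⁻¹ • y, mem_sphere_zero_iff_norm.2 (norm_smul_inv_norm hy)⟩,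
    ⟨‖y‖ * (1 + 2 * I * x 0), mem_teardropBoundary_iff.2
      ⟨‖y‖, x 0, norm_pos_iff.2 hy, by linarith, rfl⟩⟩⟩, ?_⟩
  have hy' : (‖y‖ : ℂ) ≠ 0 := by exact_mod_cast norm_ne_zero_iff.2 hy
  funext j
  show (‖y‖ * (1 + 2 * I * x 0) : ℂ) * ((‖y‖⁻¹ • y) j : ℂ) = whitney n x j
  rw [whitney_apply, PiLp.smul_apply, smul_eq_mul]
  push_cast
  field_simp
  rfl

theorem range_sphereSMul_teardropBoundary (n : ℕ) :
    range (sphereSMul (ι := Fin n) teardropBoundary) =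
      whitney n '' sphere (0 : EuclideanSpace ℝ (Fin (n + 1))) 1 \ {0} :=
  (range_sphereSMul_teardropBoundary_subset n).antisymm (whitney_sphere_diff_zero_subset_range n)

theorem stmt17_general (n : ℕ) :
    let B : Set ℂ := {z | ∃ a : ℝ, 0 < a ∧ a ≤ 1 ∧
      (z = (a : ℂ) + 2 * Complex.I * (a : ℂ) * (Real.sqrt (1 - a ^ 2) : ℂ) ∨
        z = (a : ℂ) - 2 * Complex.I * (a : ℂ) * (Real.sqrt (1 - a ^ 2) : ℂ))}
    let Φ : Metric.sphere (0 : EuclideanSpace ℝ (Fin n)) 1 × B → Fin n → ℂ :=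
      fun pz j => (pz.2 : ℂ) * ((pz.1 : EuclideanSpace ℝ (Fin n)) j : ℂ)
    Function.Injective Φ ∧
    Set.range Φ =
      (whitney n '' Metric.sphere (0 : EuclideanSpace ℝ (Fin (n + 1))) 1) \ {0} ∧
    Topology.IsEmbedding Φ := by
  intro B Φ
  have hΦ : IsEmbedding Φ :=
    isEmbedding_sphereSMul fun _ => re_pos_of_mem_teardropBoundary
  exact ⟨hΦ.injective, range_sphereSMul_teardropBoundary n, hΦ⟩

/-- The boundary evaluation of the family of holomorphic teardrops is a homeomorphism onto the
Whitney sphere with its double point removed: with `B` the boundary arcs of the teardrop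
domain minus the corner, `Φ(p, z) = z·p` is injective, has range `W(S^n_1) ∖ {0}`, and is a
topological embedding. -/
theorem stmt17 (n : ℕ) (hn : 2 ≤ n) :
    let B : Set ℂ := {z | ∃ a : ℝ, 0 < a ∧ a ≤ 1 ∧
      (z = (a : ℂ) + 2 * Complex.I * (a : ℂ) * (Real.sqrt (1 - a ^ 2) : ℂ) ∨
        z = (a : ℂ) - 2 * Complex.I * (a : ℂ) * (Real.sqrt (1 - a ^ 2) : ℂ))}
    let Φ : Metric.sphere (0 : EuclideanSpace ℝ (Fin n)) 1 × B → Fin n → ℂ :=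
      fun pz j => (pz.2 : ℂ) * ((pz.1 : EuclideanSpace ℝ (Fin n)) j : ℂ)
    Function.Injective Φ ∧
    Set.range Φ =
      (whitney n '' Metric.sphere (0 : EuclideanSpace ℝ (Fin (n + 1))) 1) \ {0} ∧
    Topology.IsEmbedding Φ :=
  stmt17_general n
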